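/- For any ideal I of a Noetherian ring R of prime characteristic p, there exists a nonnegative integer e such that (I^F)^{[p^e]} = I^{[p^e]}, where I^F is the Frobenius closure of I and J^{[p^e]} denotes the ideal generated by p^e-th powers of elements of J. -/
import Mathlib


/-- The `e`-th Frobenius power of a set `S ⊆ R`: the ideal generated by the
`p^e`-th powers of the elements of `S`. -/
def frobeniusPower {R : Type*} [CommRing R] (p e : ℕ) (S : Set R) : Ideal R :=
  Ideal.span ((fun x => x ^ p ^ e) '' S)

/-- The Frobenius closure of an ideal `I` of a ring of characteristic `p`:
`I^F = {x | x^(p^e) ∈ I^[p^e] for some e}`. -/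
def frobeniusClosure {R : Type*} [CommRing R] (p : ℕ) (I : Ideal R) : Set R :=
  {x | ∃ e : ℕ, x ^ p ^ e ∈ frobeniusPower p e (I : Set R)}

lemma frobeniusPower_step {R : Type*} [CommRing R] (p : ℕ) [Fact p.Prime] [CharP R p]
    (e : ℕ) (S : Set R) {y : R} (hy : y ∈ frobeniusPower p e S) :
    y ^ p ∈ frobeniusPower p (e + 1) S := by
  have h1 : frobenius R p y ∈ Ideal.map (frobenius R p) (frobeniusPower p e S) :=
    Ideal.mem_map_of_mem _ hy
  rw [frobeniusPower, Ideal.map_span] at h1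
  rw [show y ^ p = frobenius R p y from rfl]
  refine Ideal.span_mono ?_ h1
  rintro _ ⟨_, ⟨a, ha, rfl⟩, rfl⟩
  exact ⟨a, ha, by simp [frobenius_def, ← pow_mul, pow_succ]⟩

lemma frobeniusPower_le_of_le {R : Type*} [CommRing R] (p : ℕ) [Fact p.Prime] [CharP R p]
    (S : Set R) {x : R} {e : ℕ} (hx : x ^ p ^ e ∈ frobeniusPower p e S) (k : ℕ) :
    x ^ p ^ (e + k) ∈ frobeniusPower p (e + k) S := by
  induction k with
  | zero => simpa using hx
  | succ k ih =>
      have h := frobeniusPower_step p (e + k) S ih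
      rw [← pow_mul, ← pow_succ] at h
      exact h

/-- for any ideal `I` of a Noetherian ring `R` of prime characteristic `p`,
there is `e ≥ 0` with `(I^F)^[p^e] = I^[p^e]`. -/
theorem frobeniusClosure_exists_test_exponent
    {R : Type*} [CommRing R] [IsNoetherianRing R] (p : ℕ) [Fact p.Prime] [CharP R p]
    (I : Ideal R) :
    ∃ e : ℕ, frobeniusPower p e (frobeniusClosure p I) = frobeniusPower p e (I : Set R) := by
  classical
  -- the chain of ideals J e = {x : x^(p^e) ∈ I^[p^e]}
  have mono : ∀ e, (frobeniusPower p e (I : Set R)).comap (iterateFrobenius R p e) ≤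
      (frobeniusPower p (e + 1) (I : Set R)).comap (iterateFrobenius R p (e + 1)) := by
    intro e x hx
    rw [Ideal.mem_comap, iterateFrobenius_def] at hx ⊢
    simpa using frobeniusPower_le_of_le p (I : Set R) hx 1
  let J : ℕ →o Ideal R :=
    ⟨fun e => (frobeniusPower p e (I : Set R)).comap (iterateFrobenius R p e),
     monotone_nat_of_le_succ mono⟩
  obtain ⟨e₀, he₀⟩ := monotone_stabilizes_iff_noetherian.mpr inferInstance J
  refine ⟨e₀, le_antisymm ?_ ?_⟩
  · rw [frobeniusPower, Ideal.span_le]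
    rintro _ ⟨a, ha, rfl⟩
    obtain ⟨e, he⟩ := ha
    have h1 : a ∈ J (max e e₀) := by
      have : a ^ p ^ (e + (max e e₀ - e)) ∈ frobeniusPower p (e + (max e e₀ - e)) (I : Set R) :=
        frobeniusPower_le_of_le p (I : Set R) he _
      rw [Nat.add_sub_cancel' (le_max_left e e₀)] at this
      show a ∈ Ideal.comap (iterateFrobenius R p (max e e₀))
        (frobeniusPower p (max e e₀) (I : Set R))
      rw [Ideal.mem_comap, iterateFrobenius_def]
      exact this
    have h2 : a ∈ J e₀ := by
      rw [he₀ (max e e₀) (le_max_right e e₀)]; exact h1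
    have h3 : a ∈ Ideal.comap (iterateFrobenius R p e₀)
        (frobeniusPower p e₀ (I : Set R)) := h2
    rw [Ideal.mem_comap, iterateFrobenius_def] at h3
    exact h3
  · apply Ideal.span_mono
    apply Set.image_mono
    intro x hx
    refine ⟨0, ?_⟩
    simp only [pow_zero, pow_one]
    exact Ideal.subset_span ⟨x, hx, by simp⟩
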